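/- Assume n > 0 or m > 2. The structure 𝔄 has no near-unanimity polymorphism of arity k for any k with 3 ≤ k ≤ m^{2^n}. -/

import Mathlib

/- The universe `A = {a, 0, 1, ..., n}` of size `n+2` is encoded as `Fin (n+2)`,
where `a` is encoded as `0` and the element `i ∈ {0, ..., n}` is encoded as `i+1`;
this encoding is order-preserving for the order `a < 0 < 1 < ⋯ < n`. -/

/-- A `k`-ary operation `t` is compatible with (preserves) an `r`-ary relation `S`:
applying `t` coordinatewise to `k` tuples from `S` yields a tuple in `S`. -/
def Compat {A : Type*} {k r : ℕ} (t : (Fin k → A) → A) (S : Set (Fin r → A)) : Prop :=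
  ∀ u : Fin k → Fin r → A, (∀ j, u j ∈ S) → (fun i => t fun j => u j i) ∈ S

/-- Compatibility with a unary relation `X`: `t` maps `X^k` into `X`. -/
def CompatUnary {A : Type*} {k : ℕ} (t : (Fin k → A) → A) (X : Set A) : Prop :=
  ∀ u : Fin k → A, (∀ j, u j ∈ X) → t u ∈ X

/-- Compatibility with a binary relation, given as a set of pairs. -/
def Compat2 {A : Type*} {k : ℕ} (t : (Fin k → A) → A) (S : Set (A × A)) : Prop :=
  ∀ u w : Fin k → A, (∀ j, (u j, w j) ∈ S) → (t u, t w) ∈ S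

/-- An operation `t : A^k → A` is a near-unanimity (NU) operation if `k ≥ 3` and
any tuple whose coordinates all equal `x` except possibly one coordinate (with
value `y`) is mapped to the majority value `x`. -/
def IsNU {A : Type*} {k : ℕ} (t : (Fin k → A) → A) : Prop :=
  3 ≤ k ∧ ∀ (x y : A) (j : Fin k), t (Function.update (fun _ => x) j y) = x

/-- The `(m+1)`-ary relation `S_i`: all tuples `(x_0, …, x_m)` with
`x_0 ∈ {a,0,…,i-1}` (encoded value `≤ i`) and `x_1, …, x_m ∈ {a, i}` (encoded value
`0` or `i+1`), except the tuple `(a, i, …, i)`, together with the constant tuples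
`(j, …, j)` for `j ∈ {i+1, …, n}` (encoded value `≥ i+2`). -/
def Srel (n m i : ℕ) : Set (Fin (m + 1) → Fin (n + 2)) :=
  {x | ((x 0).val ≤ i ∧ (∀ j, j ≠ 0 → ((x j).val = 0 ∨ (x j).val = i + 1)) ∧
          ¬((x 0).val = 0 ∧ ∀ j, j ≠ 0 → (x j).val = i + 1)) ∨
        (∃ c : Fin (n + 2), i + 2 ≤ c.val ∧ ∀ j, x j = c)}

/-- A polymorphism of the structure `𝔄 = (A; S_0, …, S_n, (X)_{∅ ≠ X ⊆ A})`:
an operation compatible with each `S_i` and with every nonempty unary relation. -/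
def PolyA (n m : ℕ) {k : ℕ} (t : (Fin k → Fin (n + 2)) → Fin (n + 2)) : Prop :=
  (∀ i ≤ n, Compat t (Srel n m i)) ∧
  (∀ X : Set (Fin (n + 2)), X.Nonempty → CompatUnary t X)

/-!
A polymorphism `t` of `𝔄` is conservative, so `t C ≠ a` whenever `a` does not occur in `C`.
Record a tuple `C` by the set `Z` of its `a`-positions and the set `V ⊆ {0, …, n}` of its other
values, read as the binary number `w = ∑_{v ∈ V} 2^v`; we show `t C ≠ a` whenever
`|Z| · m^w ≤ m^(2^n)`, by downward induction on `w`. If `w ≥ 2^n`, then `C` is `(n, …, n)` with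
a single `a`, and the NU identity gives `t C = n`. Otherwise let `μ` be the least element
outside `V` and split `Z` into `m` blocks of size at most `m^(2^n - w - 1)`. The matrix whose
first column is `C` and whose `p`-th further column replaces each entry of `C` below `μ` by `a`
on block `p` and by `μ` elsewhere has all its rows in `S_μ`. The value set of each further
column is `{μ} ∪ {v ∈ V | μ < v}`, of weight `w + 1`, so by induction `t` does not send it to `a`,
and then `S_μ` forces `t C ≠ a`. For the constant tuple `(a, …, a)`, where `V = ∅` and
`|Z| = k ≤ m^(2^n)`, this contradicts idempotency.
-/

open Finset Function

theorem apply_mem_range_of_compatUnary {A : Type*} {k : ℕ} {t : (Fin k → A) → A} (hk : 0 < k)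
    (hU : ∀ X : Set A, X.Nonempty → CompatUnary t X) (u : Fin k → A) : t u ∈ Set.range u :=
  hU (Set.range u) ⟨u ⟨0, hk⟩, Set.mem_range_self _⟩ u Set.mem_range_self

theorem Function.eq_update_of_filter_eq_singleton {A : Type*} [DecidableEq A] {k : ℕ}
    {C : Fin k → A} {x y : A} {j₀ : Fin k} (hy : ({j | C j = y} : Finset (Fin k)) = {j₀})
    (hx : ∀ j, C j ≠ y → C j = x) : C = update (fun _ => x) j₀ y := by
  funext j
  by_cases hj : j = j₀
  · subst hj
    simpa using (Finset.ext_iff.1 hy j).2 (mem_singleton_self j)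
  · rw [update_of_ne hj]
    refine hx j fun h => hj ?_
    simpa using (Finset.ext_iff.1 hy j).1 (by simpa using h)

theorem Finset.exists_cover_of_card_le_mul {α : Type*} [DecidableEq α] {q : ℕ} :
    ∀ {m : ℕ} (Z : Finset α), #Z ≤ m * q →
      ∃ A : Fin m → Finset α, (∀ p, #(A p) ≤ q) ∧ ∀ j ∈ Z, ∃ p, j ∈ A p
  | 0, Z, hZ => ⟨finZeroElim, finZeroElim, fun j hj => by simp_all⟩
  | m + 1, Z, hZ => by
    obtain ⟨B, hBZ, hB⟩ := Z.exists_subset_card_eq (min_le_right q #Z)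
    obtain ⟨A, hAq, hAZ⟩ := exists_cover_of_card_le_mul (q := q) (m := m) (Z \ B) (by
      rw [card_sdiff_of_subset hBZ, hB]
      rw [Nat.succ_mul] at hZ
      omega)
    refine ⟨Fin.cons B A, Fin.forall_fin_succ.2 ⟨by simp [hB], by simpa using hAq⟩, fun j hj => ?_⟩
    by_cases hjB : j ∈ B
    · exact ⟨0, hjB⟩
    · obtain ⟨p, hp⟩ := hAZ j (mem_sdiff.2 ⟨hj, hjB⟩)
      exact ⟨p.succ, hp⟩

theorem Finset.exists_sum_two_pow_insert_filter_lt {V : Finset ℕ} {n : ℕ} (hn : n ∉ V) :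
    ∃ μ ≤ n, μ ∉ V ∧ ∑ v ∈ insert μ (V.filter (μ < ·)), 2 ^ v = ∑ v ∈ V, 2 ^ v + 1 := by
  have hex : ∃ v, v ∉ V := ⟨n, hn⟩
  set μ := Nat.find hex
  have hμ : μ ∉ V := Nat.find_spec hex
  have hlow : V.filter (· < μ) = range μ := by
    ext v
    simp only [mem_filter, mem_range, and_iff_right_iff_imp]
    exact fun hv => not_not.1 (Nat.find_min hex hv)
  have hhigh : V.filter (¬ · < μ) = V.filter (μ < ·) :=
    filter_congr fun v hv => by grind
  refine ⟨μ, Nat.find_min' hex hn, hμ, ?_⟩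
  rw [sum_insert (by simp), ← sum_filter_add_sum_filter_not V (· < μ), hlow, hhigh,
    Nat.geomSum_eq le_rfl]
  have := Nat.one_le_two_pow (n := μ)
  simp only [Nat.add_one_sub_one, Nat.div_one]
  omega

theorem Nat.eq_one_and_eq_of_mul_pow_le {m z w b : ℕ} (hm : 2 ≤ m) (hz : 0 < z) (hbw : b ≤ w)
    (h : z * m ^ w ≤ m ^ b) : z = 1 ∧ w = b := by
  have hpos : 0 < m ^ w := Nat.pow_pos (by omega)
  have hmono : m ^ b ≤ m ^ w := Nat.pow_le_pow_right (by omega) hbw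
  have hw : m ^ w = m ^ b := le_antisymm ((Nat.le_mul_of_pos_left _ hz).trans h) hmono
  refine ⟨?_, Nat.pow_right_injective hm hw⟩
  nlinarith

namespace Srel

variable {n m i : ℕ}

theorem cons_mem {x : Fin (n + 2)} {y : Fin m → Fin (n + 2)} (hx : (x : ℕ) ≤ i)
    (hy : ∀ p, y p = 0 ∨ (y p : ℕ) = i + 1) (hx0 : x = 0 → ∃ p, y p = 0) :
    (Fin.cons x y : Fin (m + 1) → Fin (n + 2)) ∈ Srel n m i := by
  refine Or.inl ⟨by simpa using hx, fun j hj => ?_, fun ⟨h0, hy'⟩ => ?_⟩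
  · obtain ⟨p, rfl⟩ := Fin.exists_succ_eq.2 hj
    rw [Fin.cons_succ]
    rcases hy p with h | h <;> simp [h]
  · obtain ⟨p, hp⟩ := hx0 (Fin.ext (by simpa using h0))
    simpa [hp] using hy' p.succ (Fin.succ_ne_zero p)

theorem const_mem {c : Fin (n + 2)} (hc : i + 2 ≤ c) : (fun _ => c) ∈ Srel n m i :=
  Or.inr ⟨c, hc, fun _ => rfl⟩

theorem head_ne_zero {x : Fin (m + 1) → Fin (n + 2)} (hx : x ∈ Srel n m i)
    (h : ∀ p : Fin m, x p.succ ≠ 0) : x 0 ≠ 0 := by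
  rcases hx with ⟨-, hval, hne⟩ | ⟨c, hc, hx⟩
  · refine fun h0 => hne ⟨by simp [h0], fun j hj => ?_⟩
    obtain ⟨p, rfl⟩ := Fin.exists_succ_eq.2 hj
    exact (hval _ hj).resolve_left fun h' => h p (Fin.ext h')
  · rw [hx]
    rintro rfl
    simp at hc

end Srel

section

variable {n m k : ℕ}

def collapseBelow (C : Fin k → Fin (n + 2)) (μ : Fin (n + 1)) (Z : Finset (Fin k)) :
    Fin k → Fin (n + 2) :=
  fun j => if C j ≤ μ.castSucc then (if j ∈ Z then 0 else μ.succ) else C j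

theorem filter_collapseBelow_eq_zero_subset (C : Fin k → Fin (n + 2)) (μ : Fin (n + 1))
    (Z : Finset (Fin k)) : ({j | collapseBelow C μ Z j = 0} : Finset (Fin k)) ⊆ Z := by
  intro j hj
  rw [mem_filter_univ, collapseBelow] at hj
  split_ifs at hj with hC hZ
  · exact hZ
  · exact absurd hj (Fin.succ_ne_zero μ)
  · exact absurd (hj ▸ Fin.zero_le _) hC

theorem collapseBelow_sub_one_mem {C : Fin k → Fin (n + 2)} {μ : Fin (n + 1)} {V : Finset ℕ}
    (hC : ∀ j, C j ≠ 0 → (C j : ℕ) - 1 ∈ V) (hμ : (μ : ℕ) ∉ V) (Z : Finset (Fin k)) (j : Fin k)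
    (hj : collapseBelow C μ Z j ≠ 0) :
    (collapseBelow C μ Z j : ℕ) - 1 ∈ insert (μ : ℕ) (V.filter ((μ : ℕ) < ·)) := by
  simp only [collapseBelow] at hj ⊢
  split_ifs at hj ⊢ with hCμ hZ
  · exact absurd rfl hj
  · simp
  · have hv := hC j hj
    refine mem_insert_of_mem (mem_filter.2 ⟨hv, ?_⟩)
    rw [Fin.le_def] at hCμ
    have : (C j : ℕ) - 1 ≠ μ := fun h => hμ (h ▸ hv)
    simp only [Fin.val_castSucc] at hCμ
    omega

theorem apply_ne_zero_of_apply_collapseBelow_ne_zero {t : (Fin k → Fin (n + 2)) → Fin (n + 2)}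
    {μ : Fin (n + 1)} (hS : Compat t (Srel n m μ)) {C : Fin k → Fin (n + 2)}
    (hμC : ∀ j, C j ≠ μ.succ) (A : Fin m → Finset (Fin k)) (hA : ∀ j, C j = 0 → ∃ p, j ∈ A p)
    (hD : ∀ p, t (collapseBelow C μ (A p)) ≠ 0) : t C ≠ 0 := by
  let u : Fin k → Fin (m + 1) → Fin (n + 2) :=
    fun j => Fin.cons (C j) fun p => collapseBelow C μ (A p) j
  have hrow : ∀ j, u j ∈ Srel n m μ := by
    intro j
    by_cases hj : C j ≤ μ.castSucc
    · refine Srel.cons_mem (by simpa [Fin.le_def] using hj) (fun p => ?_) fun h0 => ?_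
      · simp only [collapseBelow, if_pos hj]
        split_ifs <;> simp
      · obtain ⟨p, hp⟩ := hA j h0
        exact ⟨p, by simp [collapseBelow, hj, hp]⟩
    · have hu : u j = fun _ => C j := by
        funext i
        cases i using Fin.cases <;> simp [u, collapseBelow, hj]
      rw [hu]
      refine Srel.const_mem ?_
      have := hμC j
      rw [Fin.le_def, Fin.val_castSucc, not_le] at hj
      rw [Ne, Fin.ext_iff, Fin.val_succ] at this
      omega
  simpa [u] using Srel.head_ne_zero (hS u hrow) fun p => by simpa [u] using hD p

theorem exists_eq_update_last {C : Fin k → Fin (n + 2)} {V : Finset ℕ} (hm : 2 ≤ m)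
    (hC : ∀ j, C j ≠ 0 → (C j : ℕ) - 1 ∈ V) (hZ : #{j | C j = 0} * m ^ ∑ v ∈ V, 2 ^ v ≤ m ^ 2 ^ n)
    (hZ0 : 0 < #{j | C j = 0}) (hw : 2 ^ n ≤ ∑ v ∈ V, 2 ^ v) :
    ∃ j₀, C = update (fun _ => Fin.last (n + 1)) j₀ 0 := by
  obtain ⟨hZ1, hw⟩ := Nat.eq_one_and_eq_of_mul_pow_le hm hZ0 hw hZ
  have hV : V = {n} := geomSum_injective le_rfl (by simpa using hw)
  obtain ⟨j₀, hj₀⟩ := card_eq_one.1 hZ1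
  refine ⟨j₀, eq_update_of_filter_eq_singleton hj₀ fun j hj => ?_⟩
  have := hC j hj
  rw [hV, mem_singleton] at this
  have h0 : (C j : ℕ) ≠ 0 := fun h => hj (Fin.ext h)
  exact Fin.ext (by simp only [Fin.val_last]; omega)

theorem apply_ne_zero_of_card_mul_pow_le {t : (Fin k → Fin (n + 2)) → Fin (n + 2)} (hm : 2 ≤ m)
    (hS : ∀ i ≤ n, Compat t (Srel n m i)) (hcons : ∀ C, t C ∈ Set.range C)
    (hNU : ∀ j, t (update (fun _ => Fin.last (n + 1)) j 0) = Fin.last (n + 1))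
    (V : Finset ℕ) (C : Fin k → Fin (n + 2)) (hC : ∀ j, C j ≠ 0 → (C j : ℕ) - 1 ∈ V)
    (hZ : #{j | C j = 0} * m ^ ∑ v ∈ V, 2 ^ v ≤ m ^ 2 ^ n) : t C ≠ 0 := by
  rcases Nat.eq_zero_or_pos #{j | C j = 0} with hZ0 | hZ0
  · obtain ⟨j, hj⟩ := hcons C
    rw [← hj]
    exact fun h => (filter_eq_empty_iff.1 (card_eq_zero.1 hZ0)) (mem_univ j) h
  by_cases hw : 2 ^ n ≤ ∑ v ∈ V, 2 ^ v
  · obtain ⟨j₀, rfl⟩ := exists_eq_update_last hm hC hZ hZ0 hw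
    rw [hNU]
    exact Fin.last_pos.ne'
  push Not at hw
  have hnV : n ∉ V := fun h => (single_le_sum (fun _ _ => Nat.zero_le _) h).not_gt hw
  obtain ⟨μ, hμn, hμV, hw'⟩ := exists_sum_two_pow_insert_filter_lt hnV
  set w := ∑ v ∈ V, 2 ^ v
  let q := m ^ (2 ^ n - (w + 1))
  have hpow : q * m ^ (w + 1) = m ^ 2 ^ n := by
    rw [← pow_add]
    congr 1
    omega
  have hZq : #{j | C j = 0} ≤ m * q := by
    refine Nat.le_of_mul_le_mul_right (hZ.trans_eq ?_) (Nat.pow_pos (n := w) (by omega))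
    rw [← hpow, pow_succ]
    ring
  obtain ⟨A, hAq, hAZ⟩ := exists_cover_of_card_le_mul _ hZq
  let μ' : Fin (n + 1) := ⟨μ, Nat.lt_succ_of_le hμn⟩
  refine apply_ne_zero_of_apply_collapseBelow_ne_zero (μ := μ') (hS μ hμn)
    (fun j hj => hμV (by simpa [hj, μ'] using hC j (by simp [hj]))) A
    (fun j hj => hAZ j (by simpa using hj)) fun p => ?_
  refine apply_ne_zero_of_card_mul_pow_le hm hS hcons hNU _ _
    (collapseBelow_sub_one_mem (μ := μ') hC hμV (A p)) ?_
  calc #{j | collapseBelow C μ' (A p) j = 0} * m ^ ∑ v ∈ insert μ (V.filter (μ < ·)), 2 ^ v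
      ≤ q * m ^ (w + 1) := by
        rw [hw']
        gcongr
        exact (card_le_card (filter_collapseBelow_eq_zero_subset C μ' (A p))).trans (hAq p)
    _ = m ^ 2 ^ n := hpow
termination_by 2 ^ n - ∑ v ∈ V, 2 ^ v
decreasing_by omega

end

theorem stmt7 (n m : ℕ) (hm : 2 ≤ m)
    (k : ℕ) (hk : k ≤ m ^ 2 ^ n) :
    ¬ ∃ t : (Fin k → Fin (n + 2)) → Fin (n + 2), PolyA n m t ∧ IsNU t := by
  rintro ⟨t, ⟨hS, hU⟩, hk3, hNU⟩
  have hcons := apply_mem_range_of_compatUnary (by omega) hU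
  have hne := apply_ne_zero_of_card_mul_pow_le hm hS hcons (hNU _ 0) ∅ (fun _ => 0)
    (by simp) (by simpa using hk)
  exact hne (by simpa using hNU 0 0 ⟨0, by omega⟩)
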